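/- There exist constants μ > 0 and X₀ > 0 such that for every integer N ≥ 1, every R̃ > 0 with 4π R̃ ≥ X₀, and Z₁, …, Z_N i.i.d. random variables with the semicircle density, the average directivity D_av := E[ (1/N + (1/N²) Σ_{k=1}^N Σ_{l=1, l≠k}^N J₀(4π R̃ (Z_k − Z_l)))^{−1} ] satisfies D_av / N ≥ 1 / (1 + μ · N/R̃). (The paper shows μ can be taken as c₀/(4π) ≈ 0.09332.) -/

import Mathlib

open MeasureTheory ProbabilityTheory Real Filter
open scoped NNReal ENNReal

/-- Bessel function of the first kind of integer order `n`:
`Jₙ(x) = (1/π) ∫₀^π cos(nθ − x sin θ) dθ`. -/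
noncomputable def besselJ (n : ℕ) (x : ℝ) : ℝ :=
  (1 / π) * ∫ θ in (0:ℝ)..π, Real.cos (n * θ - x * Real.sin θ)

/-- The semicircle probability measure on ℝ, with density `(2/π)√(1 − z²)` on `[−1,1]`. -/
noncomputable def semicircleMeasure : Measure ℝ :=
  volume.withDensity (fun z => ENNReal.ofReal
    (if z ∈ Set.Icc (-1 : ℝ) 1 then (2 / π) * Real.sqrt (1 - z ^ 2) else 0))

noncomputable def sccA (b : ℝ) : ℝ := ∫ z in (-1:ℝ)..1, Real.cos (b*z) * Real.sqrt (1-z^2)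

lemma besselJ_zero_eq (y : ℝ) :
    besselJ 0 y = (1 / π) * ∫ θ in (0:ℝ)..π, Real.cos (y * Real.sin θ) := by
  simp [besselJ, Real.cos_neg]

lemma besselJ_zero_zero : besselJ 0 0 = 1 := by
  rw [besselJ_zero_eq]
  simp [Real.pi_ne_zero]

lemma abs_besselJ_zero_le (y : ℝ) : |besselJ 0 y| ≤ 1 := by
  rw [besselJ_zero_eq, abs_mul]
  have h : ‖∫ θ in (0:ℝ)..π, Real.cos (y * Real.sin θ)‖ ≤ 1 * |π - 0| := by
    apply intervalIntegral.norm_integral_le_of_norm_le_const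
    intro x _; exact Real.abs_cos_le_one _
  rw [abs_of_pos (by positivity : (0:ℝ) < 1/π)]
  calc (1/π) * |∫ θ in (0:ℝ)..π, Real.cos (y * Real.sin θ)|
      ≤ (1/π) * (1 * |π - 0|) := by
        exact mul_le_mul_of_nonneg_left (by simpa using h) (by positivity)
    _ = 1 := by
        rw [sub_zero, abs_of_pos Real.pi_pos]; field_simp

lemma abs_cos_sub_cos_le (a b : ℝ) : |Real.cos a - Real.cos b| ≤ |a - b| := by
  rw [Real.cos_sub_cos]
  calc |(-2) * Real.sin ((a+b)/2) * Real.sin ((a-b)/2)|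
      = 2 * |Real.sin ((a+b)/2)| * |Real.sin ((a-b)/2)| := by
        rw [abs_mul, abs_mul]; norm_num
    _ ≤ 2 * 1 * |(a-b)/2| := by
        apply mul_le_mul (by
          have := Real.abs_sin_le_one ((a+b)/2)
          nlinarith [abs_nonneg (Real.sin ((a+b)/2))]) (Real.abs_sin_le_abs) (abs_nonneg _) (by norm_num)
    _ = |a - b| := by rw [abs_div]; rw [abs_two]; ring

lemma besselJ_zero_lipschitz : LipschitzWith 1 (besselJ 0) := by
  apply LipschitzWith.of_dist_le_mul
  intro y₁ y₂
  rw [Real.dist_eq, Real.dist_eq]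
  rw [besselJ_zero_eq, besselJ_zero_eq, ← mul_sub]
  have hint : ∀ y : ℝ, IntervalIntegrable (fun θ => Real.cos (y * Real.sin θ)) volume 0 π := by
    intro y
    exact (Real.continuous_cos.comp (continuous_const.mul Real.continuous_sin)).intervalIntegrable 0 π
  rw [← intervalIntegral.integral_sub (hint y₁) (hint y₂)]
  have h : ‖∫ θ in (0:ℝ)..π, (Real.cos (y₁ * Real.sin θ) - Real.cos (y₂ * Real.sin θ))‖
      ≤ |y₁ - y₂| * |π - 0| := by
    apply intervalIntegral.norm_integral_le_of_norm_le_const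
    intro θ _
    calc ‖Real.cos (y₁ * Real.sin θ) - Real.cos (y₂ * Real.sin θ)‖
        ≤ |y₁ * Real.sin θ - y₂ * Real.sin θ| := _root_.abs_cos_sub_cos_le _ _
      _ = |y₁ - y₂| * |Real.sin θ| := by rw [← sub_mul, abs_mul]
      _ ≤ |y₁ - y₂| * 1 := by
          exact mul_le_mul_of_nonneg_left (Real.abs_sin_le_one θ) (abs_nonneg _)
      _ = |y₁ - y₂| := mul_one _
  rw [abs_mul, abs_of_pos (by positivity : (0:ℝ) < 1/π)]
  calc (1/π) * |∫ θ in (0:ℝ)..π, (Real.cos (y₁ * Real.sin θ) - Real.cos (y₂ * Real.sin θ))|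
      ≤ (1/π) * (|y₁ - y₂| * |π - 0|) := mul_le_mul_of_nonneg_left (by simpa using h) (by positivity)
    _ = 1 * |y₁ - y₂| := by
        rw [sub_zero, abs_of_pos Real.pi_pos]; field_simp

lemma integral_cos_sqrt_eq (t : ℝ) :
    ∫ z in (-1:ℝ)..1, Real.cos (t*z) * Real.sqrt (1 - z^2)
      = ∫ ψ in (0:ℝ)..π, Real.cos (t * Real.cos ψ) * Real.sin ψ ^ 2 := by
  have hg : Continuous (fun z : ℝ => Real.cos (t*z) * Real.sqrt (1 - z^2)) := by
    apply Continuous.mul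
    · exact Real.continuous_cos.comp (continuous_const.mul continuous_id)
    · exact Real.continuous_sqrt.comp (by continuity)
  have key := intervalIntegral.integral_comp_smul_deriv (a := 0) (b := π)
    (f := Real.cos) (f' := fun ψ => -Real.sin ψ)
    (g := fun z => Real.cos (t*z) * Real.sqrt (1 - z^2))
    (fun x _ => by simpa using (Real.hasDerivAt_cos x)) 
    (Real.continuous_sin.neg.continuousOn) hg
  rw [Real.cos_zero, Real.cos_pi] at key
  simp only [Function.comp_apply, smul_eq_mul] at key
  have h2 : ∫ z in (1:ℝ)..(-1), Real.cos (t*z) * Real.sqrt (1 - z^2)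
      = -∫ z in (-1:ℝ)..1, Real.cos (t*z) * Real.sqrt (1 - z^2) :=
    intervalIntegral.integral_symm _ _
  rw [h2] at key
  have h3 : ∫ ψ in (0:ℝ)..π, (-Real.sin ψ) * (Real.cos (t * Real.cos ψ) * Real.sqrt (1 - Real.cos ψ^2))
      = -∫ ψ in (0:ℝ)..π, Real.cos (t * Real.cos ψ) * Real.sin ψ ^ 2 := by
    rw [← intervalIntegral.integral_neg]
    apply intervalIntegral.integral_congr
    intro ψ hψ
    rw [Set.uIcc_of_le Real.pi_pos.le] at hψ
    have hs : Real.sqrt (1 - Real.cos ψ^2) = Real.sin ψ := by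
      rw [show (1:ℝ) - Real.cos ψ^2 = Real.sin ψ^2 by rw [Real.sin_sq]]
      exact Real.sqrt_sq (Real.sin_nonneg_of_mem_Icc hψ)
    simp only [hs]
    ring
  rw [h3] at key
  linarith [key]

lemma abs_integral_cos_sqrt_le (t : ℝ) (ht : 0 < t) :
    |∫ z in (-1:ℝ)..1, Real.cos (t*z) * Real.sqrt (1 - z^2)| ≤ π / t := by
  rw [integral_cos_sqrt_eq]
  have ht' := ht.ne'
  have hu : ∀ x ∈ Set.uIcc (0:ℝ) π, HasDerivAt Real.sin (Real.cos x) x :=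
    fun x _ => Real.hasDerivAt_sin x
  have hv : ∀ x ∈ Set.uIcc (0:ℝ) π,
      HasDerivAt (fun ψ => -Real.sin (t * Real.cos ψ) / t)
        (Real.sin x * Real.cos (t * Real.cos x)) x := by
    intro x _
    have h1 : HasDerivAt (fun ψ : ℝ => t * Real.cos ψ) (t * (-Real.sin x)) x :=
      (Real.hasDerivAt_cos x).const_mul t
    have h2 := (Real.hasDerivAt_sin (t * Real.cos x)).comp x h1
    have h3 := (h2.div_const t).neg
    have heq : -(Real.cos (t * Real.cos x) * (t * -Real.sin x) / t)
        = Real.sin x * Real.cos (t * Real.cos x) := by field_simp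
    rw [← heq]
    simp only [neg_div]
    exact h3
  have hu' : IntervalIntegrable Real.cos volume 0 π := Real.continuous_cos.intervalIntegrable _ _
  have hv' : IntervalIntegrable (fun x => Real.sin x * Real.cos (t * Real.cos x)) volume 0 π := by
    apply Continuous.intervalIntegrable
    exact Real.continuous_sin.mul (Real.continuous_cos.comp (continuous_const.mul Real.continuous_cos))
  have parts := intervalIntegral.integral_mul_deriv_eq_deriv_mul hu hv hu' hv'
  have hEq : ∫ ψ in (0:ℝ)..π, Real.cos (t * Real.cos ψ) * Real.sin ψ ^ 2
      = ∫ ψ in (0:ℝ)..π, Real.sin ψ * (Real.sin ψ * Real.cos (t * Real.cos ψ)) := by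
    apply intervalIntegral.integral_congr; intro ψ _; ring
  rw [hEq, parts]
  simp only [Real.sin_pi, Real.sin_zero, zero_mul, sub_zero, zero_sub]
  rw [abs_neg]
  have hb : ‖∫ x in (0:ℝ)..π, Real.cos x * (-Real.sin (t * Real.cos x) / t)‖ ≤ (1/t) * |π - 0| := by
    apply intervalIntegral.norm_integral_le_of_norm_le_const
    intro x _
    rw [Real.norm_eq_abs, abs_mul, abs_div]
    rw [abs_neg, abs_of_pos ht]
    calc |Real.cos x| * (|Real.sin (t * Real.cos x)| / t)
        ≤ 1 * (1 / t) := by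
          gcongr
          · exact Real.abs_cos_le_one x
          · exact Real.abs_sin_le_one _
      _ = 1/t := one_mul _
  calc |∫ x in (0:ℝ)..π, Real.cos x * (-Real.sin (t * Real.cos x) / t)| ≤ (1/t) * |π - 0| := hb
    _ = π / t := by rw [sub_zero, abs_of_pos Real.pi_pos]; ring

lemma semicircle_integral_eq (f : ℝ → ℝ) :
    ∫ u, f u ∂semicircleMeasure = ∫ u in (-1:ℝ)..1, f u * ((2/π) * Real.sqrt (1 - u^2)) := by
  have hd : (fun z : ℝ => ENNReal.ofReal
      (if z ∈ Set.Icc (-1 : ℝ) 1 then (2 / π) * Real.sqrt (1 - z ^ 2) else 0))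
      = fun z : ℝ => ((if z ∈ Set.Icc (-1 : ℝ) 1 then
          Real.toNNReal ((2 / π) * Real.sqrt (1 - z ^ 2)) else 0 : ℝ≥0) : ℝ≥0∞) := by
    funext z
    by_cases h : z ∈ Set.Icc (-1:ℝ) 1 <;> simp [ENNReal.ofReal, h]
  have hmeas : Measurable (fun z : ℝ => (if z ∈ Set.Icc (-1 : ℝ) 1 then
      Real.toNNReal ((2 / π) * Real.sqrt (1 - z ^ 2)) else 0 : ℝ≥0)) := by
    apply Measurable.ite measurableSet_Icc _ measurable_const
    apply Measurable.real_toNNReal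
    exact (continuous_const.mul (Real.continuous_sqrt.comp (by continuity))).measurable
  rw [semicircleMeasure, hd, integral_withDensity_eq_integral_smul hmeas]
  have hind : (fun z : ℝ => (if z ∈ Set.Icc (-1 : ℝ) 1 then
      Real.toNNReal ((2 / π) * Real.sqrt (1 - z ^ 2)) else 0 : ℝ≥0) • f z)
      = Set.indicator (Set.Icc (-1:ℝ) 1) (fun z => f z * ((2/π) * Real.sqrt (1 - z^2))) := by
    funext z
    by_cases h : z ∈ Set.Icc (-1:ℝ) 1
    · rw [Set.indicator_of_mem h, if_pos h, NNReal.smul_def,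
        Real.coe_toNNReal _ (by positivity : (0:ℝ) ≤ (2/π) * Real.sqrt (1 - z^2)), smul_eq_mul]
      ring
    · simp [h, Set.indicator_of_notMem h]
  rw [hind, integral_indicator measurableSet_Icc, integral_Icc_eq_integral_Ioc,
    ← intervalIntegral.integral_of_le (by norm_num : (-1:ℝ) ≤ 1)]

lemma semicircle_compl_zero : semicircleMeasure ((Set.Icc (-1:ℝ) 1)ᶜ) = 0 := by
  rw [semicircleMeasure, withDensity_apply _ measurableSet_Icc.compl]
  have : ∀ᵐ z ∂volume, z ∈ (Set.Icc (-1:ℝ) 1)ᶜ →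
      (fun z : ℝ => ENNReal.ofReal
        (if z ∈ Set.Icc (-1 : ℝ) 1 then (2 / π) * Real.sqrt (1 - z ^ 2) else 0)) z
        = (fun _ : ℝ => (0:ℝ≥0∞)) z := by
    apply ae_of_all
    intro z hz
    have hz' : z ∉ Set.Icc (-1:ℝ) 1 := hz
    simp [hz']
  rw [setLIntegral_congr_fun_ae measurableSet_Icc.compl this, lintegral_zero]

lemma semicircle_sin_integral (b : ℝ) :
    ∫ z in (-1:ℝ)..1, Real.sin (b*z) * Real.sqrt (1-z^2) = 0 := by
  have h := intervalIntegral.integral_comp_neg (a := (-1:ℝ)) (b := 1)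
    (fun z => Real.sin (b*z) * Real.sqrt (1-z^2))
  simp only [neg_neg, mul_neg, Real.sin_neg, neg_mul, neg_neg] at h
  have h2 : ∫ z in (-1:ℝ)..1, -(Real.sin (b*z) * Real.sqrt (1-(-z)^2))
      = ∫ z in (-1:ℝ)..1, -(Real.sin (b*z) * Real.sqrt (1-z^2)) := by
    apply intervalIntegral.integral_congr; intro z _; norm_num
  rw [h2, intervalIntegral.integral_neg] at h
  linarith

lemma abs_sccA_le (t : ℝ) (ht : 0 < t) : |sccA t| ≤ π / t := by
  have := abs_integral_cos_sqrt_le t ht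
  simpa [sccA] using this

lemma abs_sccA_le_pi_div_two (b : ℝ) : |sccA b| ≤ π / 2 := by
  have h1 : |sccA b| ≤ ∫ z in (-1:ℝ)..1, |Real.cos (b*z) * Real.sqrt (1-z^2)| :=
    intervalIntegral.abs_integral_le_integral_abs (by norm_num)
  have h2 : ∫ z in (-1:ℝ)..1, |Real.cos (b*z) * Real.sqrt (1-z^2)|
      ≤ ∫ z in (-1:ℝ)..1, Real.sqrt (1-z^2) := by
    apply intervalIntegral.integral_mono_on (by norm_num)
    · exact ((Real.continuous_cos.comp (continuous_const.mul continuous_id)).mul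
        (Real.continuous_sqrt.comp (by continuity))).abs.intervalIntegrable _ _
    · exact (Real.continuous_sqrt.comp (by continuity)).intervalIntegrable _ _
    · intro z _
      rw [abs_mul, abs_of_nonneg (Real.sqrt_nonneg _)]
      calc |Real.cos (b*z)| * Real.sqrt (1-z^2) ≤ 1 * Real.sqrt (1-z^2) :=
          mul_le_mul_of_nonneg_right (Real.abs_cos_le_one _) (Real.sqrt_nonneg _)
        _ = Real.sqrt (1-z^2) := one_mul _
  calc |sccA b| ≤ ∫ z in (-1:ℝ)..1, Real.sqrt (1-z^2) := h1.trans h2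
    _ = π / 2 := integral_sqrt_one_sub_sq

lemma sccA_lipschitz : LipschitzWith 2 sccA := by
  apply LipschitzWith.of_dist_le_mul
  intro b₁ b₂
  rw [Real.dist_eq, Real.dist_eq, sccA, sccA]
  have hint : ∀ b : ℝ, IntervalIntegrable (fun z => Real.cos (b*z) * Real.sqrt (1-z^2))
      volume (-1) 1 := fun b => ((Real.continuous_cos.comp
        (continuous_const.mul continuous_id)).mul
        (Real.continuous_sqrt.comp (by continuity))).intervalIntegrable _ _
  rw [← intervalIntegral.integral_sub (hint b₁) (hint b₂)]
  have h : ‖∫ z in (-1:ℝ)..1, (Real.cos (b₁*z) * Real.sqrt (1-z^2)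
      - Real.cos (b₂*z) * Real.sqrt (1-z^2))‖ ≤ |b₁ - b₂| * |1 - (-1:ℝ)| := by
    apply intervalIntegral.norm_integral_le_of_norm_le_const
    intro z hz
    have hz1 : |z| ≤ 1 := by
      rw [Set.uIoc_of_le (by norm_num : (-1:ℝ) ≤ 1)] at hz
      rw [abs_le]; exact ⟨hz.1.le, hz.2⟩
    rw [Real.norm_eq_abs, ← sub_mul, abs_mul]
    have hcc : |Real.cos (b₁*z) - Real.cos (b₂*z)| ≤ |b₁ - b₂| := by
      calc |Real.cos (b₁*z) - Real.cos (b₂*z)| ≤ |b₁*z - b₂*z| := _root_.abs_cos_sub_cos_le _ _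
        _ = |b₁ - b₂| * |z| := by rw [← sub_mul, abs_mul]
        _ ≤ |b₁ - b₂| * 1 := mul_le_mul_of_nonneg_left hz1 (abs_nonneg _)
        _ = |b₁ - b₂| := mul_one _
    have hs : |Real.sqrt (1-z^2)| ≤ 1 := by
      rw [abs_of_nonneg (Real.sqrt_nonneg _)]
      rw [show (1:ℝ) = Real.sqrt 1 by simp]
      apply Real.sqrt_le_sqrt
      nlinarith [sq_nonneg z, Real.sq_sqrt (by norm_num : (0:ℝ) ≤ 1)]
    calc |Real.cos (b₁*z) - Real.cos (b₂*z)| * |Real.sqrt (1-z^2)|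
        ≤ |b₁ - b₂| * 1 := mul_le_mul hcc hs (abs_nonneg _) (abs_nonneg _)
      _ = |b₁ - b₂| := mul_one _
  calc |∫ z in (-1:ℝ)..1, (Real.cos (b₁*z) * Real.sqrt (1-z^2)
      - Real.cos (b₂*z) * Real.sqrt (1-z^2))| ≤ |b₁ - b₂| * |1 - (-1:ℝ)| := by simpa using h
    _ = 2 * |b₁ - b₂| := by rw [show |1 - (-1:ℝ)| = 2 by norm_num]; ring

lemma sccA_sq_le_one (b : ℝ) : ((2/π) * sccA b)^2 ≤ 1 := by
  have h : |(2/π) * sccA b| ≤ 1 := by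
    rw [abs_mul, abs_of_pos (by positivity : (0:ℝ) < 2/π)]
    have := abs_sccA_le_pi_div_two b
    calc (2/π) * |sccA b| ≤ (2/π) * (π/2) := mul_le_mul_of_nonneg_left this (by positivity)
      _ = 1 := by field_simp
  calc ((2/π) * sccA b)^2 = |(2/π) * sccA b|^2 := (sq_abs _).symm
    _ ≤ 1^2 := pow_le_pow_left₀ (abs_nonneg _) h 2
    _ = 1 := one_pow 2

lemma sccA_sq_le (t : ℝ) (ht : 0 < t) : ((2/π) * sccA t)^2 ≤ 4 / t^2 := by
  have h : |(2/π) * sccA t| ≤ 2/t := by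
    rw [abs_mul, abs_of_pos (by positivity : (0:ℝ) < 2/π)]
    calc (2/π) * |sccA t| ≤ (2/π) * (π/t) := mul_le_mul_of_nonneg_left (abs_sccA_le t ht) (by positivity)
      _ = 2/t := by field_simp
  calc ((2/π) * sccA t)^2 = |(2/π) * sccA t|^2 := (sq_abs _).symm
    _ ≤ (2/t)^2 := pow_le_pow_left₀ (abs_nonneg _) h 2
    _ = 4 / t^2 := by rw [div_pow]; norm_num

lemma I_decay (x : ℝ) (hx : 1 ≤ x) :
    (1/π) * ∫ θ in (0:ℝ)..π, ((2/π) * sccA (x * Real.sin θ))^2 ≤ 8 / x := by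
  set q : ℝ → ℝ := fun θ => ((2/π) * sccA (x * Real.sin θ))^2 with hq
  have hx0 : (0:ℝ) < x := lt_of_lt_of_le one_pos hx
  set ε : ℝ := 1/x with hε
  have hε0 : 0 < ε := by positivity
  have hε1 : ε ≤ 1 := by rw [hε]; rw [div_le_one hx0]; exact hx
  have hεhalf : ε ≤ π/2 := hε1.trans (by nlinarith [Real.pi_gt_three])
  have hcont : Continuous q := by
    apply Continuous.pow
    exact continuous_const.mul (sccA_lipschitz.continuous.comp
      (continuous_const.mul Real.continuous_sin))
  have hint : ∀ a b : ℝ, IntervalIntegrable q volume a b := fun a b => hcont.intervalIntegrable a b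
  have hq1 : ∀ θ, q θ ≤ 1 := fun θ => sccA_sq_le_one _
  have hq0 : ∀ θ, 0 ≤ q θ := fun θ => sq_nonneg _
  -- middle bound
  have hmid : ∫ θ in ε..(π/2), q θ ≤ π^2 / x := by
    have hmono : ∫ θ in ε..(π/2), q θ ≤ ∫ θ in ε..(π/2), (π^2/x^2) * (θ^2)⁻¹ := by
      apply intervalIntegral.integral_mono_on hεhalf (hint _ _)
      · apply ContinuousOn.intervalIntegrable
        apply ContinuousOn.mul continuousOn_const
        apply ContinuousOn.inv₀ (by fun_prop)
        intro θ hθ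
        rw [Set.uIcc_of_le hεhalf] at hθ
        have h0 : 0 < θ := lt_of_lt_of_le hε0 hθ.1
        positivity
      · intro θ hθ
        obtain ⟨hθ1, hθ2⟩ := hθ
        have hθ0 : 0 < θ := lt_of_lt_of_le hε0 hθ1
        have hsin : 2/π * θ ≤ Real.sin θ := Real.mul_le_sin hθ0.le hθ2
        have hb0 : 0 < x * Real.sin θ := by
          apply mul_pos hx0
          calc (0:ℝ) < 2/π * θ := by positivity
            _ ≤ Real.sin θ := hsin
        have h4 : q θ ≤ 4 / (x * Real.sin θ)^2 := sccA_sq_le _ hb0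
        have hbl : 2/π * (x * θ) ≤ x * Real.sin θ := by
          calc 2/π * (x*θ) = x * (2/π*θ) := by ring
            _ ≤ x * Real.sin θ := mul_le_mul_of_nonneg_left hsin hx0.le
        have h5 : 4 / (x * Real.sin θ)^2 ≤ π^2/x^2 * (θ^2)⁻¹ := by
          have hC : (0:ℝ) < (2/π * (x*θ))^2 := by positivity
          have hB2 : (2/π * (x*θ))^2 ≤ (x*Real.sin θ)^2 :=
            pow_le_pow_left₀ (by positivity) hbl 2
          calc 4 / (x * Real.sin θ)^2 ≤ 4 / (2/π * (x*θ))^2 :=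
              div_le_div_of_nonneg_left (by norm_num) hC hB2
            _ = π^2/x^2 * (θ^2)⁻¹ := by field_simp; ring
        exact h4.trans h5
    have hFTC : ∫ θ in ε..(π/2), (θ^2)⁻¹ = -(π/2)⁻¹ + ε⁻¹ := by
      have : ∀ θ ∈ Set.uIcc ε (π/2), HasDerivAt (fun y : ℝ => -y⁻¹) ((θ^2)⁻¹) θ := by
        intro θ hθ
        rw [Set.uIcc_of_le hεhalf] at hθ
        have hθ0 : θ ≠ 0 := (lt_of_lt_of_le hε0 hθ.1).ne'
        simpa using (hasDerivAt_inv hθ0).fun_neg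
      rw [intervalIntegral.integral_eq_sub_of_hasDerivAt this]
      · ring
      · apply ContinuousOn.intervalIntegrable
        apply ContinuousOn.inv₀ (by fun_prop)
        intro θ hθ
        rw [Set.uIcc_of_le hεhalf] at hθ
        have h0 : 0 < θ := lt_of_lt_of_le hε0 hθ.1
        positivity
    have : ∫ θ in ε..(π/2), (π^2/x^2) * (θ^2)⁻¹ = (π^2/x^2) * (-(π/2)⁻¹ + ε⁻¹) := by
      rw [intervalIntegral.integral_const_mul, hFTC]
    rw [this] at hmono
    have hcalc : (π^2/x^2) * (-(π/2)⁻¹ + ε⁻¹) ≤ π^2/x := by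
      have hεinv : ε⁻¹ = x := by rw [hε]; simp
      rw [hεinv]
      have h1 : -(π/2)⁻¹ + x ≤ x := by
        have : (0:ℝ) < (π/2)⁻¹ := by positivity
        linarith
      calc (π^2/x^2) * (-(π/2)⁻¹ + x) ≤ (π^2/x^2) * x := mul_le_mul_of_nonneg_left h1 (by positivity)
        _ = π^2/x := by field_simp
    linarith
  -- flip
  have hqflip : ∀ u : ℝ, q (π - u) = q u := by
    intro u; simp only [hq, Real.sin_pi_sub]
  have hflip : ∫ θ in (π/2)..(π - ε), q θ = ∫ θ in ε..(π/2), q θ := by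
    have h := intervalIntegral.integral_comp_sub_left (a := ε) (b := π/2) q π
    rw [show π - π/2 = π/2 by ring] at h
    rw [← h]
    apply intervalIntegral.integral_congr
    intro u _
    exact hqflip u
  have hmid2 : ∫ θ in (π/2)..(π - ε), q θ ≤ π^2 / x := by rw [hflip]; exact hmid
  -- ends
  have hend1 : ∫ θ in (0:ℝ)..ε, q θ ≤ ε := by
    calc ∫ θ in (0:ℝ)..ε, q θ ≤ ∫ θ in (0:ℝ)..ε, (1:ℝ) :=
        intervalIntegral.integral_mono_on hε0.le (hint _ _)
          (intervalIntegrable_const) (fun θ _ => hq1 θ)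
      _ = ε := by simp
  have hend2 : ∫ θ in (π-ε)..π, q θ ≤ ε := by
    calc ∫ θ in (π-ε)..π, q θ ≤ ∫ θ in (π-ε)..π, (1:ℝ) :=
        intervalIntegral.integral_mono_on (by linarith [Real.pi_pos]) (hint _ _)
          (intervalIntegrable_const) (fun θ _ => hq1 θ)
      _ = ε := by simp
  -- assemble
  have hsplit1 : ∫ θ in (0:ℝ)..(π/2), q θ = (∫ θ in (0:ℝ)..ε, q θ) + ∫ θ in ε..(π/2), q θ :=
    (intervalIntegral.integral_add_adjacent_intervals (hint _ _) (hint _ _)).symm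
  have hsplit2 : ∫ θ in (π/2)..π, q θ = (∫ θ in (π/2)..(π-ε), q θ) + ∫ θ in (π-ε)..π, q θ :=
    (intervalIntegral.integral_add_adjacent_intervals (hint _ _) (hint _ _)).symm
  have hsplit : ∫ θ in (0:ℝ)..π, q θ = (∫ θ in (0:ℝ)..(π/2), q θ) + ∫ θ in (π/2)..π, q θ :=
    (intervalIntegral.integral_add_adjacent_intervals (hint _ _) (hint _ _)).symm
  have htot : ∫ θ in (0:ℝ)..π, q θ ≤ 2*ε + 2*(π^2/x) := by
    rw [hsplit, hsplit1, hsplit2]; linarith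
  have hπ : (0:ℝ) < π := Real.pi_pos
  calc (1/π) * ∫ θ in (0:ℝ)..π, q θ ≤ (1/π) * (2*ε + 2*(π^2/x)) :=
      mul_le_mul_of_nonneg_left htot (by positivity)
    _ = (2/π + 2*π) / x := by rw [hε]; field_simp
    _ ≤ 8 / x := by
        have h1 : 2/π ≤ 1 := by
          rw [div_le_one hπ]; nlinarith [Real.pi_gt_three]
        have h2 : 2*π ≤ 6.3 := by nlinarith [Real.pi_lt_d2]
        gcongr
        linarith

lemma sum_cos_identity {N : ℕ} (a : ℝ) (z : Fin N → ℝ) :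
    ∑ k : Fin N, ∑ l : Fin N, Real.cos (a * z k - a * z l)
      = (∑ k : Fin N, Real.cos (a * z k))^2 + (∑ k : Fin N, Real.sin (a * z k))^2 := by
  simp_rw [Real.cos_sub]
  rw [pow_two, pow_two, Finset.sum_mul_sum, Finset.sum_mul_sum, ← Finset.sum_add_distrib]
  congr 1
  funext k
  rw [← Finset.sum_add_distrib]

lemma directivity_sum_eq (N : ℕ) (x : ℝ) (z : Fin N → ℝ) :
    ∑ k : Fin N, ∑ l ∈ Finset.univ.erase k, besselJ 0 (x * (z k - z l))
      = (1/π) * (∫ θ in (0:ℝ)..π, ((∑ k : Fin N, Real.cos (x * Real.sin θ * z k))^2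
          + (∑ k : Fin N, Real.sin (x * Real.sin θ * z k))^2)) - N := by
  have hdiag : ∀ k : Fin N, besselJ 0 (x * (z k - z k)) = 1 := by
    intro k; rw [sub_self, mul_zero, besselJ_zero_zero]
  have hstep : ∀ k : Fin N, ∑ l ∈ Finset.univ.erase k, besselJ 0 (x * (z k - z l))
      = (∑ l : Fin N, besselJ 0 (x * (z k - z l))) - 1 := by
    intro k
    rw [Finset.sum_erase_eq_sub (Finset.mem_univ k), hdiag k]
  rw [Finset.sum_congr rfl (fun k _ => hstep k), Finset.sum_sub_distrib]
  simp only [Finset.sum_const, Finset.card_univ, Fintype.card_fin, nsmul_eq_mul, mul_one]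
  congr 1
  -- ∑ k ∑ l J₀ = (1/π) ∫ (C² + S²)
  have hrw : ∀ k l : Fin N, besselJ 0 (x * (z k - z l))
      = (1/π) * ∫ θ in (0:ℝ)..π, Real.cos (x * Real.sin θ * z k - x * Real.sin θ * z l) := by
    intro k l
    rw [besselJ_zero_eq]
    congr 1
    apply intervalIntegral.integral_congr
    intro θ _
    exact congrArg Real.cos (by ring)
  have hcont : ∀ k l : Fin N, Continuous (fun θ =>
      Real.cos (x * Real.sin θ * z k - x * Real.sin θ * z l)) := by
    intro k l
    apply Real.continuous_cos.comp
    exact ((continuous_const.mul Real.continuous_sin).mul continuous_const).sub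
      ((continuous_const.mul Real.continuous_sin).mul continuous_const)
  calc ∑ k : Fin N, ∑ l : Fin N, besselJ 0 (x * (z k - z l))
      = ∑ k : Fin N, ∑ l : Fin N, (1/π) * ∫ θ in (0:ℝ)..π,
          Real.cos (x * Real.sin θ * z k - x * Real.sin θ * z l) := by
        exact Finset.sum_congr rfl (fun k _ => Finset.sum_congr rfl (fun l _ => hrw k l))
    _ = (1/π) * ∑ k : Fin N, ∑ l : Fin N, ∫ θ in (0:ℝ)..π,
          Real.cos (x * Real.sin θ * z k - x * Real.sin θ * z l) := by
        rw [Finset.mul_sum]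
        exact Finset.sum_congr rfl (fun k _ => by rw [Finset.mul_sum])
    _ = (1/π) * ∑ k : Fin N, ∫ θ in (0:ℝ)..π, ∑ l : Fin N,
          Real.cos (x * Real.sin θ * z k - x * Real.sin θ * z l) := by
        congr 1
        exact Finset.sum_congr rfl (fun k _ =>
          (intervalIntegral.integral_finset_sum
            (fun l _ => (hcont k l).intervalIntegrable _ _)).symm)
    _ = (1/π) * ∫ θ in (0:ℝ)..π, ∑ k : Fin N, ∑ l : Fin N,
          Real.cos (x * Real.sin θ * z k - x * Real.sin θ * z l) := by
        congr 1
        exact (intervalIntegral.integral_finset_sum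
          (fun k _ => (continuous_finset_sum _ (fun l _ => hcont k l)).intervalIntegrable _ _)).symm
    _ = (1/π) * ∫ θ in (0:ℝ)..π, ((∑ k : Fin N, Real.cos (x * Real.sin θ * z k))^2
          + (∑ k : Fin N, Real.sin (x * Real.sin θ * z k))^2) := by
        congr 1
        apply intervalIntegral.integral_congr
        intro θ _
        exact sum_cos_identity (x * Real.sin θ) z

lemma abs_sum_bessel_le (N : ℕ) (x : ℝ) (z : Fin N → ℝ) :
    |∑ k : Fin N, ∑ l ∈ Finset.univ.erase k, besselJ 0 (x * (z k - z l))| ≤ (N:ℝ)^2 := by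
  have hinner : ∀ k : Fin N, |∑ l ∈ Finset.univ.erase k, besselJ 0 (x * (z k - z l))| ≤ (N:ℝ) := by
    intro k
    calc |∑ l ∈ Finset.univ.erase k, besselJ 0 (x * (z k - z l))|
        ≤ ∑ l ∈ Finset.univ.erase k, |besselJ 0 (x * (z k - z l))| :=
          Finset.abs_sum_le_sum_abs _ _
      _ ≤ ∑ l ∈ Finset.univ.erase k, (1:ℝ) :=
          Finset.sum_le_sum (fun l _ => abs_besselJ_zero_le _)
      _ = ((Finset.univ.erase k).card : ℝ) := by simp
      _ ≤ (N:ℝ) := by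
          have := Finset.card_le_card (Finset.erase_subset k (Finset.univ : Finset (Fin N)))
          simp only [Finset.card_univ, Fintype.card_fin] at this
          exact_mod_cast this
  calc |∑ k : Fin N, ∑ l ∈ Finset.univ.erase k, besselJ 0 (x * (z k - z l))|
      ≤ ∑ k : Fin N, |∑ l ∈ Finset.univ.erase k, besselJ 0 (x * (z k - z l))| :=
        Finset.abs_sum_le_sum_abs _ _
    _ ≤ ∑ _k : Fin N, (N:ℝ) := Finset.sum_le_sum (fun k _ => hinner k)
    _ = (N:ℝ)^2 := by simp [pow_two]

lemma W_lower (N : ℕ) (hN : 1 ≤ N) (x : ℝ) (hx : 1 ≤ x) (z : Fin N → ℝ)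
    (hz : ∀ k, z k ∈ Set.Icc (-1:ℝ) 1) :
    1/(4*π*x) ≤ 1/(N:ℝ) + (1/(N:ℝ)^2) * ∑ k : Fin N,
      ∑ l ∈ Finset.univ.erase k, besselJ 0 (x * (z k - z l)) := by
  have hπ : (0:ℝ) < π := Real.pi_pos
  have hx0 : (0:ℝ) < x := lt_of_lt_of_le one_pos hx
  have hN0 : (0:ℝ) < (N:ℝ) := by exact_mod_cast hN
  rw [directivity_sum_eq]
  set g : ℝ → ℝ := fun θ => ((∑ k : Fin N, Real.cos (x * Real.sin θ * z k))^2
      + (∑ k : Fin N, Real.sin (x * Real.sin θ * z k))^2) with hg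
  have hgc : Continuous g := by
    apply Continuous.add
    · exact (continuous_finset_sum _ (fun k _ => Real.continuous_cos.comp
        ((continuous_const.mul Real.continuous_sin).mul continuous_const))).pow 2
    · exact (continuous_finset_sum _ (fun k _ => Real.continuous_sin.comp
        ((continuous_const.mul Real.continuous_sin).mul continuous_const))).pow 2
  set c : ℝ := 1/(2*x) with hc
  have hc0 : 0 < c := by positivity
  have hcπ : c ≤ π := by
    have : c ≤ 1/2 := by
      rw [hc]; apply div_le_div_of_nonneg_left one_pos.le (by positivity); linarith
    linarith [Real.pi_gt_three]
  have hlow : ∀ θ ∈ Set.Icc 0 c, ((N:ℝ)^2/2) ≤ g θ := by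
    intro θ hθ
    obtain ⟨hθ0, hθc⟩ := hθ
    have hcos : ∀ k : Fin N, (7/8 : ℝ) ≤ Real.cos (x * Real.sin θ * z k) := by
      intro k
      have hzk : |z k| ≤ 1 := by
        rw [abs_le]; exact ⟨(hz k).1, (hz k).2⟩
      have habs : |x * Real.sin θ * z k| ≤ 1/2 := by
        rw [abs_mul, abs_mul, abs_of_pos hx0]
        calc x * |Real.sin θ| * |z k| ≤ x * θ * 1 := by
              apply mul_le_mul _ hzk (abs_nonneg _) (by positivity)
              exact mul_le_mul_of_nonneg_left (by
                calc |Real.sin θ| ≤ |θ| := Real.abs_sin_le_abs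
                  _ = θ := abs_of_nonneg hθ0) hx0.le
          _ = x * θ := mul_one _
          _ ≤ x * c := mul_le_mul_of_nonneg_left hθc hx0.le
          _ = 1/2 := by
              rw [hc, mul_one_div, div_eq_div_iff (by positivity) (by norm_num : (2:ℝ) ≠ 0)]
              ring
      have hsq : (x * Real.sin θ * z k)^2 ≤ 1/4 := by
        calc (x * Real.sin θ * z k)^2 = |x * Real.sin θ * z k|^2 := (sq_abs _).symm
          _ ≤ (1/2)^2 := pow_le_pow_left₀ (abs_nonneg _) habs 2
          _ = 1/4 := by norm_num
      calc (7/8 : ℝ) ≤ 1 - (x * Real.sin θ * z k)^2/2 := by linarith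
        _ ≤ Real.cos (x * Real.sin θ * z k) := Real.one_sub_sq_div_two_le_cos
    have hC : (7/8 : ℝ) * N ≤ ∑ k : Fin N, Real.cos (x * Real.sin θ * z k) := by
      calc (7/8 : ℝ) * N = ∑ _k : Fin N, (7/8 : ℝ) := by simp [mul_comm]
        _ ≤ ∑ k : Fin N, Real.cos (x * Real.sin θ * z k) :=
            Finset.sum_le_sum (fun k _ => hcos k)
    have hC2 : ((7/8 : ℝ) * N)^2 ≤ (∑ k : Fin N, Real.cos (x * Real.sin θ * z k))^2 :=
      pow_le_pow_left₀ (by positivity) hC 2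
    have : ((N:ℝ)^2/2) ≤ ((7/8 : ℝ) * N)^2 := by nlinarith [sq_nonneg (N:ℝ)]
    calc ((N:ℝ)^2/2) ≤ (∑ k : Fin N, Real.cos (x * Real.sin θ * z k))^2 := this.trans hC2
      _ ≤ g θ := by
          have hgθ : g θ = (∑ k : Fin N, Real.cos (x * Real.sin θ * z k))^2
              + (∑ k : Fin N, Real.sin (x * Real.sin θ * z k))^2 := rfl
          rw [hgθ]
          nlinarith [sq_nonneg (∑ k : Fin N, Real.sin (x * Real.sin θ * z k))]
  have hsplit : ∫ θ in (0:ℝ)..π, g θ = (∫ θ in (0:ℝ)..c, g θ) + ∫ θ in c..π, g θ :=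
    (intervalIntegral.integral_add_adjacent_intervals
      (hgc.intervalIntegrable _ _) (hgc.intervalIntegrable _ _)).symm
  have h1 : (N:ℝ)^2/(4*x) ≤ ∫ θ in (0:ℝ)..c, g θ := by
    have : ∫ θ in (0:ℝ)..c, ((N:ℝ)^2/2) ≤ ∫ θ in (0:ℝ)..c, g θ :=
      intervalIntegral.integral_mono_on hc0.le intervalIntegrable_const
        (hgc.intervalIntegrable _ _) hlow
    rw [intervalIntegral.integral_const, smul_eq_mul, sub_zero, hc] at this
    calc (N:ℝ)^2/(4*x) = 1/(2*x) * ((N:ℝ)^2/2) := by field_simp; ring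
      _ ≤ ∫ θ in (0:ℝ)..c, g θ := this
  have h2 : 0 ≤ ∫ θ in c..π, g θ :=
    intervalIntegral.integral_nonneg hcπ (fun θ _ => by positivity)
  have hI : (N:ℝ)^2/(4*x) ≤ ∫ θ in (0:ℝ)..π, g θ := by rw [hsplit]; linarith
  have hNne : (N:ℝ) ≠ 0 := hN0.ne'
  have heq : 1/(N:ℝ) + (1/(N:ℝ)^2) * ((1/π) * (∫ θ in (0:ℝ)..π, g θ) - N)
      = (1/(N:ℝ)^2) * (1/π) * (∫ θ in (0:ℝ)..π, g θ) := by
    field_simp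
    ring
  rw [heq]
  calc 1/(4*π*x) = (1/(N:ℝ)^2) * (1/π) * ((N:ℝ)^2/(4*x)) := by field_simp
    _ ≤ (1/(N:ℝ)^2) * (1/π) * (∫ θ in (0:ℝ)..π, g θ) := by
        apply mul_le_mul_of_nonneg_left hI (by positivity)

/-- Theorem 1 of the paper: There are constants `μ > 0` and `X₀ > 0` such that
for every `N ≥ 1`, every `R̃ > 0` with `4πR̃ ≥ X₀`, and i.i.d. semicircle variables `Z₁,…,Z_N`,
the average directivity `D_av = E[(1/N + (1/N²) Σ_{k≠l} J₀(4πR̃(Zₖ−Z_l)))⁻¹]` satisfies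
`D_av / N ≥ 1/(1 + μ N/R̃)`. -/
theorem normalized_directivity_lower_bound :
    ∃ c > (0:ℝ), ∃ X₀ > (0:ℝ),
      ∀ (N : ℕ), 1 ≤ N → ∀ (R : ℝ), 0 < R → X₀ ≤ 4 * π * R →
      ∀ (Ω : Type) [MeasurableSpace Ω] (μ : Measure Ω) [IsProbabilityMeasure μ],
      ∀ (Z : Fin N → Ω → ℝ), (∀ k, Measurable (Z k)) →
        iIndepFun Z μ →
        (∀ k, Measure.map (Z k) μ = semicircleMeasure) →
        (∫ ω, (1 / N + (1 / (N : ℝ) ^ 2) * ∑ k : Fin N, ∑ l ∈ Finset.univ.erase k,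
            besselJ 0 (4 * π * R * (Z k ω - Z l ω)))⁻¹ ∂μ) / N
          ≥ 1 / (1 + c * N / R) := by
  refine ⟨1, one_pos, 1, one_pos, ?_⟩
  intro N hN R hR hX₀ Ω _ μ _ Z hZmeas hindep hlaw
  have hπ : (0:ℝ) < π := Real.pi_pos
  set x : ℝ := 4 * π * R with hxdef
  have hx1 : (1:ℝ) ≤ x := hX₀
  have hx0 : (0:ℝ) < x := lt_of_lt_of_le one_pos hx1
  have hN0 : (0:ℝ) < (N:ℝ) := by exact_mod_cast hN
  set W : Ω → ℝ := fun ω => 1 / (N:ℝ) + (1 / (N : ℝ) ^ 2) * ∑ k : Fin N,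
      ∑ l ∈ Finset.univ.erase k, besselJ 0 (x * (Z k ω - Z l ω)) with hW
  -- measurability of W
  have hWmeas : Measurable W := by
    apply Measurable.add measurable_const
    apply Measurable.const_mul
    apply Finset.measurable_sum
    intro k _
    apply Finset.measurable_sum
    intro l _
    exact besselJ_zero_lipschitz.continuous.measurable.comp
      (((hZmeas k).sub (hZmeas l)).const_mul x)
  -- a.e. all coordinates in [-1,1]
  have hzae : ∀ᵐ ω ∂μ, ∀ k, Z k ω ∈ Set.Icc (-1:ℝ) 1 := by
    rw [MeasureTheory.ae_all_iff]
    intro k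
    have h0 : μ (Z k ⁻¹' (Set.Icc (-1:ℝ) 1)ᶜ) = 0 := by
      have h1 : Measure.map (Z k) μ ((Set.Icc (-1:ℝ) 1)ᶜ) = 0 := by
        rw [hlaw k]; exact semicircle_compl_zero
      rwa [Measure.map_apply (hZmeas k) measurableSet_Icc.compl] at h1
    rw [ae_iff]
    exact h0
  have hWlow : ∀ᵐ ω ∂μ, 1/(4*π*x) ≤ W ω := by
    filter_upwards [hzae] with ω hω
    exact W_lower N hN x hx1 (fun k => Z k ω) hω
  have hWabs : ∀ ω, |W ω| ≤ 2 := by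
    intro ω
    have h := abs_sum_bessel_le N x (fun k => Z k ω)
    have hN1 : 1/(N:ℝ) ≤ 1 := by
      rw [div_le_one hN0]; exact_mod_cast hN
    calc |W ω| ≤ |1/(N:ℝ)| + |(1 / (N : ℝ) ^ 2) * ∑ k : Fin N,
        ∑ l ∈ Finset.univ.erase k, besselJ 0 (x * (Z k ω - Z l ω))| := abs_add_le _ _
      _ ≤ 1 + 1 := by
          apply add_le_add
          · rw [abs_of_pos (by positivity)]; exact hN1
          · rw [abs_mul, abs_of_pos (by positivity : (0:ℝ) < 1/(N:ℝ)^2)]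
            calc 1/(N:ℝ)^2 * |∑ k : Fin N, ∑ l ∈ Finset.univ.erase k,
                besselJ 0 (x * (Z k ω - Z l ω))| ≤ 1/(N:ℝ)^2 * (N:ℝ)^2 :=
                  mul_le_mul_of_nonneg_left h (by positivity)
              _ = 1 := by field_simp
      _ = 2 := by norm_num
  have hWint : Integrable W μ :=
    Integrable.mono' (integrable_const (2:ℝ)) hWmeas.aestronglyMeasurable
      (ae_of_all _ fun ω => by rw [Real.norm_eq_abs]; exact hWabs ω)
  have hWinvint : Integrable (fun ω => (W ω)⁻¹) μ := by
    apply Integrable.mono' (integrable_const ((4*π*x):ℝ)) hWmeas.inv.aestronglyMeasurable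
    filter_upwards [hWlow] with ω hω
    have hWpos : 0 < W ω := lt_of_lt_of_le (by positivity) hω
    rw [Real.norm_eq_abs, Pi.inv_apply, abs_of_pos (inv_pos.mpr hWpos)]
    have h1 := one_div_le_one_div_of_le (by positivity : (0:ℝ) < 1/(4*π*x)) hω
    rw [one_div_one_div] at h1
    rw [inv_eq_one_div]
    exact h1
  -- expected value bound
  set e : ℝ := (1/π) * ∫ θ in (0:ℝ)..π, ((2/π) * sccA (x * Real.sin θ))^2 with hedef
  have he0 : 0 ≤ e := by
    apply mul_nonneg (by positivity)
    apply intervalIntegral.integral_nonneg hπ.le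
    intro θ _; positivity
  have he8 : e ≤ 8/x := I_decay x hx1
  have hintterm : ∀ k l : Fin N, Integrable (fun ω => besselJ 0 (x * (Z k ω - Z l ω))) μ := by
    intro k l
    apply Integrable.mono' (integrable_const (1:ℝ))
      (besselJ_zero_lipschitz.continuous.measurable.comp
        (((hZmeas k).sub (hZmeas l)).const_mul x)).aestronglyMeasurable
    exact ae_of_all _ fun ω => by rw [Real.norm_eq_abs]; exact abs_besselJ_zero_le _
  -- per-pair expectation
  have hpair : ∀ k l : Fin N, l ≠ k → (∫ ω, besselJ 0 (x * (Z k ω - Z l ω)) ∂μ) = e := by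
    intro k l hlk
    have hindkl : IndepFun (Z k) (Z l) μ := hindep.indepFun (Ne.symm hlk)
    have hmc : ∀ b : ℝ, Measurable (fun u : ℝ => Real.cos (b*u)) :=
      fun b => Real.measurable_cos.comp (measurable_id.const_mul b)
    have hms : ∀ b : ℝ, Measurable (fun u : ℝ => Real.sin (b*u)) :=
      fun b => Real.measurable_sin.comp (measurable_id.const_mul b)
    have hmarg_cos : ∀ b : ℝ, ∀ m : Fin N, (∫ ω, Real.cos (b * Z m ω) ∂μ) = (2/π) * sccA b := by
      intro b m
      rw [← MeasureTheory.integral_map (hZmeas m).aemeasurable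
        ((hmc b).aestronglyMeasurable), hlaw m, semicircle_integral_eq]
      rw [sccA, ← intervalIntegral.integral_const_mul]
      apply intervalIntegral.integral_congr
      intro u _
      ring
    have hmarg_sin : ∀ b : ℝ, ∀ m : Fin N, (∫ ω, Real.sin (b * Z m ω) ∂μ) = 0 := by
      intro b m
      rw [← MeasureTheory.integral_map (hZmeas m).aemeasurable
        ((hms b).aestronglyMeasurable), hlaw m, semicircle_integral_eq]
      have hpull : ∫ u in (-1:ℝ)..1, Real.sin (b*u) * ((2/π)*Real.sqrt (1-u^2))
          = (2/π) * ∫ u in (-1:ℝ)..1, Real.sin (b*u) * Real.sqrt (1-u^2) := by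
        rw [← intervalIntegral.integral_const_mul]
        apply intervalIntegral.integral_congr
        intro u _
        ring
      rw [hpull, semicircle_sin_integral, mul_zero]
    have hEcos : ∀ b : ℝ, (∫ ω, Real.cos (b * (Z k ω - Z l ω)) ∂μ) = ((2/π) * sccA b)^2 := by
      intro b
      have hcs : (fun ω => Real.cos (b * (Z k ω - Z l ω)))
          = fun ω => Real.cos (b * Z k ω) * Real.cos (b * Z l ω)
              + Real.sin (b * Z k ω) * Real.sin (b * Z l ω) := by
        funext ω; rw [mul_sub, Real.cos_sub]
      rw [hcs]
      have hicc : Integrable (fun ω => Real.cos (b * Z k ω) * Real.cos (b * Z l ω)) μ := by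
        apply Integrable.mono' (integrable_const (1:ℝ))
        · exact (((hmc b).comp (hZmeas k)).mul ((hmc b).comp (hZmeas l))).aestronglyMeasurable
        · apply ae_of_all; intro ω; rw [Real.norm_eq_abs, abs_mul]
          exact mul_le_one₀ (Real.abs_cos_le_one _) (abs_nonneg _) (Real.abs_cos_le_one _)
      have hiss : Integrable (fun ω => Real.sin (b * Z k ω) * Real.sin (b * Z l ω)) μ := by
        apply Integrable.mono' (integrable_const (1:ℝ))
        · exact (((hms b).comp (hZmeas k)).mul ((hms b).comp (hZmeas l))).aestronglyMeasurable
        · apply ae_of_all; intro ω; rw [Real.norm_eq_abs, abs_mul]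
          exact mul_le_one₀ (Real.abs_sin_le_one _) (abs_nonneg _) (Real.abs_sin_le_one _)
      rw [integral_add hicc hiss]
      have hintc : ∀ m : Fin N, Integrable (fun ω => Real.cos (b * Z m ω)) μ := by
        intro m
        apply Integrable.mono' (integrable_const (1:ℝ))
          ((hmc b).comp (hZmeas m)).aestronglyMeasurable
        exact ae_of_all _ fun ω => by rw [Real.norm_eq_abs]; exact Real.abs_cos_le_one _
      have hints : ∀ m : Fin N, Integrable (fun ω => Real.sin (b * Z m ω)) μ := by
        intro m
        apply Integrable.mono' (integrable_const (1:ℝ))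
          ((hms b).comp (hZmeas m)).aestronglyMeasurable
        exact ae_of_all _ fun ω => by rw [Real.norm_eq_abs]; exact Real.abs_sin_le_one _
      have h1 : (∫ ω, Real.cos (b * Z k ω) * Real.cos (b * Z l ω) ∂μ)
          = (∫ ω, Real.cos (b * Z k ω) ∂μ) * (∫ ω, Real.cos (b * Z l ω) ∂μ) :=
        (hindkl.comp (hmc b) (hmc b)).integral_mul_eq_mul_integral (hintc k).aestronglyMeasurable (hintc l).aestronglyMeasurable
      have h2 : (∫ ω, Real.sin (b * Z k ω) * Real.sin (b * Z l ω) ∂μ)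
          = (∫ ω, Real.sin (b * Z k ω) ∂μ) * (∫ ω, Real.sin (b * Z l ω) ∂μ) :=
        (hindkl.comp (hms b) (hms b)).integral_mul_eq_mul_integral (hints k).aestronglyMeasurable (hints l).aestronglyMeasurable
      rw [h1, h2, hmarg_cos b k, hmarg_cos b l, hmarg_sin b k, hmarg_sin b l]
      ring
    have hstep1 : ∀ ω, besselJ 0 (x * (Z k ω - Z l ω))
        = (1/π) * ∫ θ in (0:ℝ)..π, Real.cos ((x * Real.sin θ) * (Z k ω - Z l ω)) := by
      intro ω
      rw [besselJ_zero_eq]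
      congr 1
      apply intervalIntegral.integral_congr
      intro θ _
      exact congrArg Real.cos (by ring)
    simp_rw [hstep1]
    rw [integral_const_mul]
    haveI hfin : IsFiniteMeasure (volume.restrict (Set.Ioc (0:ℝ) π)) :=
      ⟨by rw [Measure.restrict_apply_univ]; exact measure_Ioc_lt_top⟩
    have hKmeas : Measurable (Function.uncurry fun (ω : Ω) (θ : ℝ) =>
        Real.cos ((x * Real.sin θ) * (Z k ω - Z l ω))) := by
      apply Real.measurable_cos.comp
      apply Measurable.mul
      · exact (Real.measurable_sin.comp measurable_snd).const_mul x
      · exact ((hZmeas k).comp measurable_fst).sub ((hZmeas l).comp measurable_fst)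
    have hKint : Integrable (Function.uncurry fun (ω : Ω) (θ : ℝ) =>
        Real.cos ((x * Real.sin θ) * (Z k ω - Z l ω)))
        (μ.prod (volume.restrict (Set.Ioc (0:ℝ) π))) := by
      apply Integrable.mono' (integrable_const (1:ℝ)) hKmeas.aestronglyMeasurable
      exact ae_of_all _ fun p => by rw [Real.norm_eq_abs]; exact Real.abs_cos_le_one _
    have hio : ∀ ω, (∫ θ in (0:ℝ)..π, Real.cos ((x * Real.sin θ) * (Z k ω - Z l ω)))
        = ∫ θ in Set.Ioc (0:ℝ) π, Real.cos ((x * Real.sin θ) * (Z k ω - Z l ω)) ∂volume :=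
      fun ω => intervalIntegral.integral_of_le hπ.le
    simp_rw [hio]
    rw [MeasureTheory.integral_integral_swap hKint]
    simp_rw [hEcos]
    rw [hedef, intervalIntegral.integral_of_le hπ.le]
  have hEW : ∫ ω, W ω ∂μ ≤ 1/(N:ℝ) + 1/R := by
    have hsum : ∫ ω, W ω ∂μ = 1/(N:ℝ) + (1 / (N : ℝ) ^ 2) * ∑ k : Fin N,
        ∑ l ∈ Finset.univ.erase k, (∫ ω, besselJ 0 (x * (Z k ω - Z l ω)) ∂μ) := by
      rw [hW]
      rw [integral_add (integrable_const _) (Integrable.const_mul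
        (integrable_finset_sum _ (fun k _ => integrable_finset_sum _ (fun l _ => hintterm k l))) _)]
      congr 1
      · simp
      · rw [integral_const_mul]
        congr 1
        rw [integral_finset_sum _ (fun k _ => integrable_finset_sum _ (fun l _ => hintterm k l))]
        exact Finset.sum_congr rfl (fun k _ =>
          integral_finset_sum _ (fun l _ => hintterm k l))
    rw [hsum]
    have hsum2 : ∑ k : Fin N, ∑ l ∈ Finset.univ.erase k,
        (∫ ω, besselJ 0 (x * (Z k ω - Z l ω)) ∂μ) ≤ (N:ℝ)^2 * e := by
      calc ∑ k : Fin N, ∑ l ∈ Finset.univ.erase k,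
          (∫ ω, besselJ 0 (x * (Z k ω - Z l ω)) ∂μ)
          = ∑ k : Fin N, ∑ l ∈ Finset.univ.erase k, e := by
            apply Finset.sum_congr rfl
            intro k _
            apply Finset.sum_congr rfl
            intro l hl
            exact hpair k l (Finset.mem_erase.mp hl).1
        _ ≤ ∑ _k : Fin N, ∑ _l : Fin N, e := by
            apply Finset.sum_le_sum
            intro k _
            exact Finset.sum_le_sum_of_subset_of_nonneg
              (Finset.erase_subset _ _) (fun _ _ _ => he0)
        _ = (N:ℝ)^2 * e := by
            simp [Finset.sum_const, Finset.card_univ, pow_two]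
            ring
    have hfinal : (1 / (N : ℝ) ^ 2) * ((N:ℝ)^2 * e) ≤ 1/R := by
      have h1 : (1 / (N : ℝ) ^ 2) * ((N:ℝ)^2 * e) = e := by field_simp
      rw [h1]
      calc e ≤ 8/x := he8
        _ ≤ 1/R := by
            rw [hxdef, div_le_div_iff₀ (by positivity) hR]
            nlinarith [Real.pi_gt_three]
    have h2 : (1 / (N : ℝ) ^ 2) * ∑ k : Fin N, ∑ l ∈ Finset.univ.erase k,
        (∫ ω, besselJ 0 (x * (Z k ω - Z l ω)) ∂μ) ≤ (1 / (N : ℝ) ^ 2) * ((N:ℝ)^2 * e) :=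
      mul_le_mul_of_nonneg_left hsum2 (by positivity)
    linarith
  -- tangent line argument
  set a : ℝ := 1/(N:ℝ) + 1/R with ha
  have ha0 : 0 < a := by positivity
  have htangent : ∀ᵐ ω ∂μ, 2/a - W ω/a^2 ≤ (W ω)⁻¹ := by
    filter_upwards [hWlow] with ω hω
    have hWpos : 0 < W ω := lt_of_lt_of_le (by positivity) hω
    have hrw : 2/a - W ω/a^2 = (2*a - W ω)/a^2 := by field_simp
    rw [hrw, inv_eq_one_div, div_le_div_iff₀ (by positivity) hWpos]
    nlinarith [sq_nonneg (W ω - a)]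
  have hint2 : Integrable (fun ω => 2/a - W ω/a^2) μ :=
    (integrable_const _).sub (hWint.div_const _)
  have hmono := integral_mono_ae hint2 hWinvint htangent
  have hcompute : ∫ ω, (2/a - W ω/a^2) ∂μ = 2/a - (∫ ω, W ω ∂μ)/a^2 := by
    rw [integral_sub (integrable_const _) (hWint.div_const _), integral_const, integral_div]
    simp [measure_univ]
  have hlow2 : 1/a ≤ ∫ ω, (W ω)⁻¹ ∂μ := by
    have h3 : (∫ ω, W ω ∂μ)/a^2 ≤ a/a^2 := by gcongr
    have h4 : 2/a - a/a^2 = 1/a := by field_simp; ring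
    rw [hcompute] at hmono
    linarith
  -- final algebra
  have hgoal : 1/(1 + 1*(N:ℝ)/R) = (1/a)/(N:ℝ) := by
    rw [ha]
    rw [div_div, one_div, one_div]
    congr 1
    field_simp
  rw [ge_iff_le, hgoal]
  gcongr
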